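/- arXiv:2408.01662 — 3 statements merged into one kernel-verified Lean document; each statement's English description precedes it below -/
import Mathlib

section
/- Let Y = S D T^T be an SVD with S^T S = I, T orthogonal, D diagonal. Let γ, λ₁ > 0, Z ∈ ℝ^{n×m}, P ∈ ℝ^{m×m} symmetric positive definite. Define A = -(γ-1) D² + γ² D S^T Z (γ Z^T Z + λ₁ P)^{-1} Z^T S D. Then for any unit vector v ∈ ℝ^p with q = T^T v, the infimum over η ∈ ℝ^m of f(v,η) = ‖Y - Y v v^T‖_F² + γ‖Y v - Z η‖₂² + λ₁ η^T P η equals ‖Y‖_F² - q^T A q. -/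
/-!
Since `v ⬝ᵥ v = 1`, right multiplication by `vvᵀ` is an orthogonal projection, so
`‖Y - Yvvᵀ‖_F² = ‖Y‖_F² - ‖Yv‖²`. The remaining terms form a quadratic in `η` whose Hessian is
`2M` with `M = γZᵀZ + λP` positive definite; completing the square, the infimum is attained at
`η = γM⁻¹ZᵀYv` and equals `γ‖Yv‖² - γ²(ZᵀYv)ᵀM⁻¹(ZᵀYv)`. Finally `Yv = SDq` and `SᵀS = I`
turn `‖Yv‖²` into `qᵀD²q` and `ZᵀYv` into `ZᵀSDq`, which assembles `qᵀAq`.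
-/

open Matrix

/-- Squared Frobenius norm of a real matrix. -/
noncomputable def frob2 {n p : ℕ} (M : Matrix (Fin n) (Fin p) ℝ) : ℝ :=
  Matrix.trace (Mᵀ * M)

namespace Matrix

variable {ι κ R : Type*} [Fintype ι] [Fintype κ]

theorem dotProduct_transpose_mul_mul_mulVec [CommSemiring R] (B : Matrix κ ι R)
    (N : Matrix κ κ R) (x : ι → R) :
    x ⬝ᵥ ((Bᵀ * N * B) *ᵥ x) = (B *ᵥ x) ⬝ᵥ (N *ᵥ (B *ᵥ x)) := by
  rw [← mulVec_mulVec, ← mulVec_mulVec, dotProduct_mulVec, vecMul_transpose]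

theorem trace_transpose_mul_self_sub_mul_vecMulVec [CommRing R] (Y : Matrix κ ι R)
    {v : ι → R} (hv : v ⬝ᵥ v = 1) :
    trace ((Y - Y * vecMulVec v v)ᵀ * (Y - Y * vecMulVec v v))
      = trace (Yᵀ * Y) - (Y *ᵥ v) ⬝ᵥ (Y *ᵥ v) := by
  set w := Y *ᵥ v
  have hYv : Y * vecMulVec v v = vecMulVec w v := mul_vecMulVec Y v v
  have hYtw : (Yᵀ *ᵥ w) ⬝ᵥ v = w ⬝ᵥ w := by
    rw [dotProduct_comm, dotProduct_mulVec, vecMul_transpose]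
  rw [hYv, transpose_sub, transpose_vecMulVec, Matrix.sub_mul, Matrix.mul_sub, Matrix.mul_sub,
    mul_vecMulVec, vecMulVec_mul, vecMulVec_mul_vecMulVec, trace_sub, trace_sub, trace_sub,
    trace_vecMulVec, trace_vecMulVec, trace_vecMulVec, ← mulVec_transpose, hYtw, dotProduct_comm v,
    hYtw, dotProduct_smul, hv, smul_eq_mul, mul_one]
  ring

theorem ridge_penalty_eq_quadratic_form [CommRing R] (Z : Matrix κ ι R) (P : Matrix ι ι R)
    (γ lam : R) (w : κ → R) (η : ι → R) :
    γ * ((w - Z *ᵥ η) ⬝ᵥ (w - Z *ᵥ η)) + lam * (η ⬝ᵥ (P *ᵥ η))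
      = η ⬝ᵥ ((γ • (Zᵀ * Z) + lam • P) *ᵥ η) - 2 * (η ⬝ᵥ (γ • (Zᵀ *ᵥ w))) + γ * (w ⬝ᵥ w) := by
  have hcross : η ⬝ᵥ (Zᵀ *ᵥ w) = w ⬝ᵥ (Z *ᵥ η) := by
    rw [dotProduct_mulVec, vecMul_transpose, dotProduct_comm]
  have hZZ : η ⬝ᵥ ((Zᵀ * Z) *ᵥ η) = (Z *ᵥ η) ⬝ᵥ (Z *ᵥ η) := by
    rw [← mulVec_mulVec, dotProduct_mulVec, vecMul_transpose]
  simp only [add_mulVec, smul_mulVec, dotProduct_add, dotProduct_smul, smul_eq_mul, hcross, hZZ,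
    dotProduct_sub, sub_dotProduct, dotProduct_comm (Z *ᵥ η) w]
  ring

namespace PosDef

theorem iInf_dotProduct_mulVec_sub_add [DecidableEq ι] {M : Matrix ι ι ℝ} (hM : M.PosDef)
    (b : ι → ℝ) (c : ℝ) :
    ⨅ x, (x ⬝ᵥ (M *ᵥ x) - 2 * (x ⬝ᵥ b) + c) = c - b ⬝ᵥ (M⁻¹ *ᵥ b) := by
  set e := M⁻¹ *ᵥ b
  have hMe : M *ᵥ e = b := by
    rw [mulVec_mulVec, mul_nonsing_inv _ ((isUnit_iff_isUnit_det M).mp hM.isUnit), one_mulVec]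
  have hMt : Mᵀ = M := by simpa using hM.isHermitian.eq
  have hsquare : ∀ x, x ⬝ᵥ (M *ᵥ x) - 2 * (x ⬝ᵥ b) + c
      = (x - e) ⬝ᵥ (M *ᵥ (x - e)) + (c - b ⬝ᵥ e) := by
    intro x
    have : e ⬝ᵥ (M *ᵥ x) = x ⬝ᵥ b := by
      rw [dotProduct_mulVec, ← mulVec_transpose, hMt, hMe, dotProduct_comm]
    rw [mulVec_sub, hMe, dotProduct_sub, sub_dotProduct, sub_dotProduct, this, dotProduct_comm b e]
    ring
  refine IsGLB.ciInf_eq (IsLeast.isGLB ⟨⟨e, ?_⟩, ?_⟩)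
  · simp [hsquare]
  · rintro _ ⟨x, rfl⟩
    have := hM.posSemidef.dotProduct_mulVec_nonneg (x - e)
    simp only [star_trivial] at this
    simp only [hsquare]
    linarith

end PosDef

end Matrix

theorem stmt8_general {n p m : ℕ} (Y S : Matrix (Fin n) (Fin p) ℝ) (d : Fin p → ℝ)
    (T : Matrix (Fin p) (Fin p) ℝ) (Z : Matrix (Fin n) (Fin m) ℝ)
    (P : Matrix (Fin m) (Fin m) ℝ) (γ lam : ℝ)
    (hS : Sᵀ * S = 1) (hY : Y = S * diagonal d * Tᵀ)
    (hγ : 0 < γ) (hlam : 0 < lam) (hP : P.PosDef)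
    (A : Matrix (Fin p) (Fin p) ℝ)
    (hA : A = (-(γ - 1)) • (diagonal d * diagonal d) +
      γ ^ 2 • (diagonal d * Sᵀ * Z * (γ • (Zᵀ * Z) + lam • P)⁻¹ * Zᵀ * S * diagonal d))
    (v : Fin p → ℝ) (hv : v ⬝ᵥ v = 1) (q : Fin p → ℝ) (hq : q = Tᵀ *ᵥ v) :
    ⨅ η : Fin m → ℝ,
        (frob2 (Y - Y * vecMulVec v v)
          + γ * ((Y *ᵥ v - Z *ᵥ η) ⬝ᵥ (Y *ᵥ v - Z *ᵥ η))
          + lam * (η ⬝ᵥ (P *ᵥ η)))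
      = frob2 Y - q ⬝ᵥ (A *ᵥ q) := by
  set D := diagonal d
  set M := γ • (Zᵀ * Z) + lam • P
  set w := Y *ᵥ v
  have hM : M.PosDef := by
    refine PosDef.posSemidef_add (PosSemidef.smul ?_ hγ.le) (hP.smul hlam)
    simpa using posSemidef_conjTranspose_mul_self Z
  have hw : w = (S * D) *ᵥ q := by rw [hq, mulVec_mulVec, ← hY]
  have hww : w ⬝ᵥ w = q ⬝ᵥ ((D * D) *ᵥ q) := by
    have hSD : (S * D)ᵀ * (1 : Matrix (Fin n) (Fin n) ℝ) * (S * D) = D * D := by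
      rw [Matrix.mul_one, transpose_mul, diagonal_transpose, Matrix.mul_assoc, ← Matrix.mul_assoc Sᵀ,
        hS, Matrix.one_mul]
    rw [← hSD, dotProduct_transpose_mul_mul_mulVec, one_mulVec, hw]
  have hZw : (Zᵀ *ᵥ w) ⬝ᵥ (M⁻¹ *ᵥ (Zᵀ *ᵥ w)) = q ⬝ᵥ ((D * Sᵀ * Z * M⁻¹ * Zᵀ * S * D) *ᵥ q) := by
    have hB : (Zᵀ * S * D)ᵀ * M⁻¹ * (Zᵀ * S * D) = D * Sᵀ * Z * M⁻¹ * Zᵀ * S * D := by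
      simp only [transpose_mul, transpose_transpose, D, diagonal_transpose, Matrix.mul_assoc]
    rw [← hB, dotProduct_transpose_mul_mul_mulVec, hw, mulVec_mulVec, Matrix.mul_assoc]
  calc ⨅ η : Fin m → ℝ, (frob2 (Y - Y * vecMulVec v v)
          + γ * ((w - Z *ᵥ η) ⬝ᵥ (w - Z *ᵥ η)) + lam * (η ⬝ᵥ (P *ᵥ η)))
      = ⨅ η : Fin m → ℝ, (η ⬝ᵥ (M *ᵥ η) - 2 * (η ⬝ᵥ (γ • (Zᵀ *ᵥ w)))
          + (frob2 Y - w ⬝ᵥ w + γ * (w ⬝ᵥ w))) := by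
        congr 1 with η
        rw [add_assoc, ridge_penalty_eq_quadratic_form, frob2, frob2,
          trace_transpose_mul_self_sub_mul_vecMulVec Y hv]
        ring
    _ = frob2 Y - w ⬝ᵥ w + γ * (w ⬝ᵥ w) - (γ • (Zᵀ *ᵥ w)) ⬝ᵥ (M⁻¹ *ᵥ (γ • (Zᵀ *ᵥ w))) :=
        hM.iInf_dotProduct_mulVec_sub_add _ _
    _ = frob2 Y - q ⬝ᵥ (A *ᵥ q) := by
        rw [hA, mulVec_smul, smul_dotProduct, dotProduct_smul, hZw, hww, add_mulVec, smul_mulVec,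
          smul_mulVec, dotProduct_add, dotProduct_smul, dotProduct_smul]
        simp only [smul_eq_mul]
        ring

theorem stmt8 {n p m : ℕ} (Y S : Matrix (Fin n) (Fin p) ℝ) (d : Fin p → ℝ)
    (T : Matrix (Fin p) (Fin p) ℝ) (Z : Matrix (Fin n) (Fin m) ℝ)
    (P : Matrix (Fin m) (Fin m) ℝ) (γ lam : ℝ)
    (hS : Sᵀ * S = 1) (hT : Tᵀ * T = 1) (hY : Y = S * diagonal d * Tᵀ)
    (hγ : 0 < γ) (hlam : 0 < lam) (hP : P.PosDef)
    (A : Matrix (Fin p) (Fin p) ℝ)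
    (hA : A = (-(γ - 1)) • (diagonal d * diagonal d) +
      γ ^ 2 • (diagonal d * Sᵀ * Z * (γ • (Zᵀ * Z) + lam • P)⁻¹ * Zᵀ * S * diagonal d))
    (v : Fin p → ℝ) (hv : v ⬝ᵥ v = 1) (q : Fin p → ℝ) (hq : q = Tᵀ *ᵥ v) :
    ⨅ η : Fin m → ℝ,
        (frob2 (Y - Y * vecMulVec v v)
          + γ * ((Y *ᵥ v - Z *ᵥ η) ⬝ᵥ (Y *ᵥ v - Z *ᵥ η))
          + lam * (η ⬝ᵥ (P *ᵥ η)))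
      = frob2 Y - q ⬝ᵥ (A *ᵥ q) :=
  stmt8_general Y S d T Z P γ lam hS hY hγ hlam hP A hA v hv q hq
end

section
/- Let f(v, η) = ‖Y - Y v v^T‖_F² + γ‖Y v - Z η‖₂² + λ η^T P η with Y = S D T^T an SVD, γ, λ > 0, P symmetric positive definite. If q is a unit eigenvector of A = -(γ-1)D² + γ² D S^T Z (γ Z^T Z + λ P)^{-1} Z^T S D corresponding to its largest eigenvalue, then v* = T q together with η* = (γ Z^T Z + λ P)^{-1}(γ Z^T S D q) is a global minimizer of f over {(v, η) : v^T v = 1}. -/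
open Matrix

/-!
For a unit vector `v`, expanding the objective and completing the square in `η` with
`M = γ ZᵀZ + λ P` gives
`f(v, η) = tr (YᵀY) - xᵀ A x + (η - η₀)ᵀ M (η - η₀)`, where `x = Tᵀ v` is again a unit vector
and `η₀ = M⁻¹ (γ Zᵀ Y v)`, because `Y v = S D x` and `S` has orthonormal columns.
The middle term is at least `-μ`, with equality at `x = q`, and the last one is nonnegative
and vanishes at `η = η₀`.
-/

section General

variable {ι κ μ R : Type*} [Fintype ι] [Fintype κ] [Fintype μ]

theorem dotProduct_transpose_mul_self_mulVec [CommSemiring R] (B : Matrix κ ι R)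
    (x : ι → R) : x ⬝ᵥ ((Bᵀ * B) *ᵥ x) = (B *ᵥ x) ⬝ᵥ (B *ᵥ x) := by
  rw [← mulVec_mulVec, dotProduct_mulVec, vecMul_transpose, dotProduct_comm]

theorem dotProduct_mulVec_self_of_transpose_mul_self [DecidableEq ι] [CommSemiring R]
    {B : Matrix κ ι R} (hB : Bᵀ * B = 1) (x : ι → R) : (B *ᵥ x) ⬝ᵥ (B *ᵥ x) = x ⬝ᵥ x := by
  rw [← dotProduct_transpose_mul_self_mulVec, hB, one_mulVec]

theorem dotProduct_mulVec_sub_two_mul_dotProduct_eq [DecidableEq ι] [CommRing R]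
    {M : Matrix ι ι R} (hM : M.IsSymm) (hdet : IsUnit M.det) (b w : ι → R) :
    w ⬝ᵥ (M *ᵥ w) - 2 * (b ⬝ᵥ w) =
      (w - M⁻¹ *ᵥ b) ⬝ᵥ (M *ᵥ (w - M⁻¹ *ᵥ b)) - b ⬝ᵥ (M⁻¹ *ᵥ b) := by
  have hMb : M *ᵥ (M⁻¹ *ᵥ b) = b := by rw [mulVec_mulVec, mul_nonsing_inv M hdet, one_mulVec]
  have hsymm : (M⁻¹ *ᵥ b) ⬝ᵥ (M *ᵥ w) = b ⬝ᵥ w := by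
    have h := vecMul_transpose M (M⁻¹ *ᵥ b)
    rw [hM.eq, hMb] at h
    rw [dotProduct_mulVec, h]
  rw [mulVec_sub, hMb, dotProduct_sub, sub_dotProduct, sub_dotProduct, hsymm,
    dotProduct_comm w b, dotProduct_comm (M⁻¹ *ᵥ b) b]
  ring

theorem dotProduct_sub_mulVec_self [CommRing R] (a : κ → R) (Z : Matrix κ μ R) (η : μ → R) :
    (a - Z *ᵥ η) ⬝ᵥ (a - Z *ᵥ η) =
      a ⬝ᵥ a - 2 * ((Zᵀ *ᵥ a) ⬝ᵥ η) + η ⬝ᵥ ((Zᵀ * Z) *ᵥ η) := by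
  have hcross : (Zᵀ *ᵥ a) ⬝ᵥ η = a ⬝ᵥ (Z *ᵥ η) := by
    rw [dotProduct_comm, dotProduct_mulVec, vecMul_transpose, dotProduct_comm]
  rw [dotProduct_transpose_mul_self_mulVec, hcross]
  simp only [dotProduct_sub, sub_dotProduct, dotProduct_comm (Z *ᵥ η) a]
  ring

theorem posDef_smul_transpose_mul_self_add_smul {Z : Matrix κ μ ℝ} {P : Matrix μ μ ℝ}
    {γ lam : ℝ} (hγ : 0 ≤ γ) (hlam : 0 < lam) (hP : P.PosDef) :
    (γ • (Zᵀ * Z) + lam • P).PosDef :=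
  PosDef.posSemidef_add
    (conjTranspose_eq_transpose_of_trivial Z ▸ (posSemidef_conjTranspose_mul_self Z).smul hγ)
    (hP.smul hlam)

end General

section RapPCA

variable {n p m : ℕ}

theorem frob2_sub_mul_vecMulVec_self (Y : Matrix (Fin n) (Fin p) ℝ) {v : Fin p → ℝ}
    (hv : v ⬝ᵥ v = 1) :
    frob2 (Y - Y * vecMulVec v v) = trace (Yᵀ * Y) - (Y *ᵥ v) ⬝ᵥ (Y *ᵥ v) := by
  have hW : vecMulVec v v * vecMulVec v v = vecMulVec v v := by
    rw [vecMulVec_mul_vecMulVec, hv, one_smul]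
  have hWt : (vecMulVec v v)ᵀ = vecMulVec v v := by rw [transpose_vecMulVec]
  have hexp : (Y - Y * vecMulVec v v) * (Y - Y * vecMulVec v v)ᵀ
      = Y * Yᵀ - Y * vecMulVec v v * Yᵀ := by
    rw [transpose_sub, transpose_mul, hWt]
    simp only [Matrix.mul_sub, Matrix.sub_mul, Matrix.mul_assoc]
    rw [← Matrix.mul_assoc (vecMulVec v v), hW]
    abel
  rw [frob2, trace_mul_comm, hexp, trace_sub, trace_mul_comm Y, mul_vecMulVec, vecMulVec_mul,
    trace_vecMulVec, vecMul_transpose]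

noncomputable def rapObjective (Y : Matrix (Fin n) (Fin p) ℝ) (Z : Matrix (Fin n) (Fin m) ℝ)
    (P : Matrix (Fin m) (Fin m) ℝ) (γ lam : ℝ) (v : Fin p → ℝ) (η : Fin m → ℝ) : ℝ :=
  frob2 (Y - Y * vecMulVec v v) + γ * ((Y *ᵥ v - Z *ᵥ η) ⬝ᵥ (Y *ᵥ v - Z *ᵥ η))
    + lam * (η ⬝ᵥ (P *ᵥ η))

def rapGram (Z : Matrix (Fin n) (Fin m) ℝ) (P : Matrix (Fin m) (Fin m) ℝ) (γ lam : ℝ) :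
    Matrix (Fin m) (Fin m) ℝ :=
  γ • (Zᵀ * Z) + lam • P

/-- The paper's `A` is `rapMatrix S d Z (rapGram Z P γ lam)⁻¹ γ`. -/
def rapMatrix (S : Matrix (Fin n) (Fin p) ℝ) (d : Fin p → ℝ) (Z : Matrix (Fin n) (Fin m) ℝ)
    (N : Matrix (Fin m) (Fin m) ℝ) (γ : ℝ) : Matrix (Fin p) (Fin p) ℝ :=
  (-(γ - 1)) • (diagonal d * diagonal d) +
    γ ^ 2 • (diagonal d * Sᵀ * Z * N * Zᵀ * S * diagonal d)

theorem rapObjective_eq {Y : Matrix (Fin n) (Fin p) ℝ} (Z : Matrix (Fin n) (Fin m) ℝ)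
    (P : Matrix (Fin m) (Fin m) ℝ) (γ lam : ℝ) {v : Fin p → ℝ} (hv : v ⬝ᵥ v = 1)
    (η : Fin m → ℝ) :
    rapObjective Y Z P γ lam v η = trace (Yᵀ * Y) + (γ - 1) * ((Y *ᵥ v) ⬝ᵥ (Y *ᵥ v))
      + (η ⬝ᵥ (rapGram Z P γ lam *ᵥ η) - 2 * ((γ • (Zᵀ *ᵥ (Y *ᵥ v))) ⬝ᵥ η)) := by
  rw [rapObjective, rapGram, frob2_sub_mul_vecMulVec_self Y hv, dotProduct_sub_mulVec_self,
    add_mulVec, smul_mulVec, smul_mulVec, dotProduct_add, dotProduct_smul, dotProduct_smul,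
    smul_dotProduct]
  simp only [smul_eq_mul]
  ring

theorem dotProduct_rapMatrix_mulVec {S : Matrix (Fin n) (Fin p) ℝ} (hS : Sᵀ * S = 1)
    (d : Fin p → ℝ) (Z : Matrix (Fin n) (Fin m) ℝ) (N : Matrix (Fin m) (Fin m) ℝ) (γ : ℝ)
    (x : Fin p → ℝ) :
    x ⬝ᵥ (rapMatrix S d Z N γ *ᵥ x) =
      -(γ - 1) * ((S *ᵥ (diagonal d *ᵥ x)) ⬝ᵥ (S *ᵥ (diagonal d *ᵥ x)))
        + (γ • (Zᵀ *ᵥ (S *ᵥ (diagonal d *ᵥ x)))) ⬝ᵥ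
            (N *ᵥ (γ • (Zᵀ *ᵥ (S *ᵥ (diagonal d *ᵥ x))))) := by
  set C := Zᵀ * S * diagonal d
  have hC : diagonal d * Sᵀ * Z * N * Zᵀ * S * diagonal d = Cᵀ * N * C := by
    simp only [C, transpose_mul, diagonal_transpose, transpose_transpose, Matrix.mul_assoc]
  have hDD : x ⬝ᵥ ((diagonal d * diagonal d) *ᵥ x) =
      (diagonal d *ᵥ x) ⬝ᵥ (diagonal d *ᵥ x) := by
    simpa only [diagonal_transpose] using dotProduct_transpose_mul_self_mulVec (diagonal d) x
  have hCNC : x ⬝ᵥ ((Cᵀ * N * C) *ᵥ x) = (C *ᵥ x) ⬝ᵥ (N *ᵥ (C *ᵥ x)) := by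
    rw [← mulVec_mulVec, ← mulVec_mulVec, dotProduct_mulVec, vecMul_transpose]
  rw [rapMatrix, hC, add_mulVec, smul_mulVec, smul_mulVec, dotProduct_add, dotProduct_smul,
    dotProduct_smul, hDD, hCNC, dotProduct_mulVec_self_of_transpose_mul_self hS, mulVec_smul,
    smul_dotProduct, dotProduct_smul]
  simp only [C, mulVec_mulVec, Matrix.mul_assoc, smul_eq_mul]
  ring

theorem rapObjective_eq_of_svd {Y S : Matrix (Fin n) (Fin p) ℝ} {d : Fin p → ℝ}
    {T : Matrix (Fin p) (Fin p) ℝ} {Z : Matrix (Fin n) (Fin m) ℝ}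
    {P : Matrix (Fin m) (Fin m) ℝ} {γ lam : ℝ} (hS : Sᵀ * S = 1)
    (hY : Y = S * diagonal d * Tᵀ) (hM : (rapGram Z P γ lam).PosDef) {v : Fin p → ℝ}
    (hv : v ⬝ᵥ v = 1) (η : Fin m → ℝ) :
    let M := rapGram Z P γ lam
    let η₀ := M⁻¹ *ᵥ (γ • (Zᵀ *ᵥ (S *ᵥ (diagonal d *ᵥ (Tᵀ *ᵥ v)))))
    rapObjective Y Z P γ lam v η =
      trace (Yᵀ * Y) - (Tᵀ *ᵥ v) ⬝ᵥ (rapMatrix S d Z M⁻¹ γ *ᵥ (Tᵀ *ᵥ v))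
        + (η - η₀) ⬝ᵥ (M *ᵥ (η - η₀)) := by
  intro M η₀
  have hYv : Y *ᵥ v = S *ᵥ (diagonal d *ᵥ (Tᵀ *ᵥ v)) := by
    rw [hY, mulVec_mulVec, mulVec_mulVec]
  rw [rapObjective_eq Z P γ lam hv η,
    dotProduct_mulVec_sub_two_mul_dotProduct_eq (isHermitian_iff_isSymm.mp hM.isHermitian)
      hM.det_pos.ne'.isUnit, dotProduct_rapMatrix_mulVec hS, hYv]
  ring

end RapPCA

theorem stmt10 {n p m : ℕ} (Y S : Matrix (Fin n) (Fin p) ℝ) (d : Fin p → ℝ)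
    (T : Matrix (Fin p) (Fin p) ℝ) (Z : Matrix (Fin n) (Fin m) ℝ)
    (P : Matrix (Fin m) (Fin m) ℝ) (γ lam : ℝ)
    (hγ : 0 < γ) (hlam : 0 < lam) (hP : P.PosDef)
    (hS : Sᵀ * S = 1) (hT : Tᵀ * T = 1) (hY : Y = S * diagonal d * Tᵀ)
    (A : Matrix (Fin p) (Fin p) ℝ)
    (hA : A = (-(γ - 1)) • (diagonal d * diagonal d) +
      γ ^ 2 • (diagonal d * Sᵀ * Z * (γ • (Zᵀ * Z) + lam • P)⁻¹ * Zᵀ * S * diagonal d))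
    (q : Fin p → ℝ) (μ : ℝ) (hq : q ⬝ᵥ q = 1) (heig : A *ᵥ q = μ • q)
    (hmax : ∀ x : Fin p → ℝ, x ⬝ᵥ x = 1 → x ⬝ᵥ (A *ᵥ x) ≤ μ)
    (f : (Fin p → ℝ) → (Fin m → ℝ) → ℝ)
    (hf : f = fun v η => frob2 (Y - Y * vecMulVec v v)
      + γ * ((Y *ᵥ v - Z *ᵥ η) ⬝ᵥ (Y *ᵥ v - Z *ᵥ η)) + lam * (η ⬝ᵥ (P *ᵥ η))) :
    ∀ (v : Fin p → ℝ) (η : Fin m → ℝ), v ⬝ᵥ v = 1 →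
      f (T *ᵥ q) ((γ • (Zᵀ * Z) + lam • P)⁻¹ *ᵥ (γ • (Zᵀ *ᵥ (S *ᵥ (diagonal d *ᵥ q)))))
        ≤ f v η := by
  intro v η hv
  have hM : (rapGram Z P γ lam).PosDef := posDef_smul_transpose_mul_self_add_smul hγ.le hlam hP
  change A = rapMatrix S d Z (rapGram Z P γ lam)⁻¹ γ at hA
  change f = rapObjective Y Z P γ lam at hf
  subst hA hf
  have hTq : (T *ᵥ q) ⬝ᵥ (T *ᵥ q) = 1 := by
    rw [dotProduct_mulVec_self_of_transpose_mul_self hT, hq]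
  have hTTq : Tᵀ *ᵥ (T *ᵥ q) = q := by rw [mulVec_mulVec, hT, one_mulVec]
  have hTv : (Tᵀ *ᵥ v) ⬝ᵥ (Tᵀ *ᵥ v) = 1 := by
    rwa [dotProduct_mulVec_self_of_transpose_mul_self
      (by rw [transpose_transpose, mul_eq_one_comm.mp hT])]
  calc rapObjective Y Z P γ lam (T *ᵥ q)
        ((rapGram Z P γ lam)⁻¹ *ᵥ (γ • (Zᵀ *ᵥ (S *ᵥ (diagonal d *ᵥ q)))))
      = trace (Yᵀ * Y) - μ := by
        rw [rapObjective_eq_of_svd hS hY hM hTq, hTTq, heig, sub_self, mulVec_zero,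
          dotProduct_zero, dotProduct_smul, hq, smul_eq_mul, mul_one, add_zero]
    _ ≤ trace (Yᵀ * Y) -
          (Tᵀ *ᵥ v) ⬝ᵥ (rapMatrix S d Z (rapGram Z P γ lam)⁻¹ γ *ᵥ (Tᵀ *ᵥ v)) := by
        linarith [hmax _ hTv]
    _ ≤ rapObjective Y Z P γ lam v η := by
        rw [rapObjective_eq_of_svd hS hY hM hv, le_add_iff_nonneg_right]
        simpa only [star_trivial] using hM.posSemidef.dotProduct_mulVec_nonneg _
end

section
/- Let M ∈ ℝ^{n×m}, P ∈ ℝ^{m×m} symmetric positive definite, and γ, λ > 0. Then γ² M (γ M^T M + λ P)^{-1} M^T is symmetric positive semidefinite, and all its eigenvalues are at most γ. -/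
/-!
With `Q = γ MᵀM + λP`, `z = Q⁻¹Mᵀx` and `u = Mz`, the quadratic form of `M Q⁻¹ Mᵀ` at `x` is
`s = u ⬝ x = z ⬝ Qz ≥ γ ‖u‖²`. Expanding `0 ≤ ‖γu - x‖²` gives `2γs ≤ γ²‖u‖² + ‖x‖² ≤ γs + ‖x‖²`,
so `γ s ≤ ‖x‖²`: the quadratic form of `γ² M Q⁻¹ Mᵀ` is at most `γ‖x‖²`, and the eigenvalues,
being values of the quadratic form at unit eigenvectors, are at most `γ`.
-/

open Matrix

namespace Matrix

variable {m n 𝕜 : Type*} [Fintype m] [Fintype n]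

lemma IsHermitian.eigenvalues_le_of_re_dotProduct_mulVec_le [RCLike 𝕜] [DecidableEq n]
    {A : Matrix n n 𝕜} (hA : A.IsHermitian) {c : ℝ}
    (h : ∀ x, RCLike.re (star x ⬝ᵥ A *ᵥ x) ≤ c * RCLike.re (star x ⬝ᵥ x)) (i : n) :
    hA.eigenvalues i ≤ c := by
  have hunit : star ⇑(hA.eigenvectorBasis i) ⬝ᵥ ⇑(hA.eigenvectorBasis i) = 1 := by
    rw [dotProduct_comm, ← EuclideanSpace.inner_eq_star_dotProduct, inner_self_eq_norm_sq_to_K,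
      hA.eigenvectorBasis.orthonormal.1 i]
    simp
  simpa [hunit, ← hA.eigenvalues_eq] using h (hA.eigenvectorBasis i)

lemma posDef_smul_transpose_mul_self_add {γ : ℝ} (hγ : 0 ≤ γ) (M : Matrix n m ℝ)
    {R : Matrix m m ℝ} (hR : R.PosDef) : (γ • (Mᵀ * M) + R).PosDef :=
  hR.posSemidef_add <| by
    simpa using (posSemidef_conjTranspose_mul_self M).smul hγ

lemma mul_dotProduct_mulVec_mul_inv_mul_transpose_le [DecidableEq m] {γ : ℝ} (hγ : 0 < γ)
    (M : Matrix n m ℝ) {R : Matrix m m ℝ} (hR : R.PosDef) (x : n → ℝ) :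
    γ * (x ⬝ᵥ (M * (γ • (Mᵀ * M) + R)⁻¹ * Mᵀ) *ᵥ x) ≤ x ⬝ᵥ x := by
  set Q := γ • (Mᵀ * M) + R with hQ_def
  have hQ : Q.PosDef := posDef_smul_transpose_mul_self_add hγ.le M hR
  set z := Q⁻¹ *ᵥ Mᵀ *ᵥ x
  set u := M *ᵥ z
  have hform : x ⬝ᵥ (M * Q⁻¹ * Mᵀ) *ᵥ x = u ⬝ᵥ x := by
    rw [← mulVec_mulVec, ← mulVec_mulVec, dotProduct_comm]
  have hQz : Q *ᵥ z = Mᵀ *ᵥ x := by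
    rw [mulVec_mulVec, mul_nonsing_inv Q hQ.det_pos.ne'.isUnit, one_mulVec]
  have hux : u ⬝ᵥ x = γ * (u ⬝ᵥ u) + z ⬝ᵥ R *ᵥ z := by
    have hzQz : z ⬝ᵥ Q *ᵥ z = u ⬝ᵥ x := by
      rw [hQz, dotProduct_transpose_mulVec, dotProduct_comm]
    rw [← hzQz, hQ_def, add_mulVec, dotProduct_add, smul_mulVec, dotProduct_smul,
      ← mulVec_mulVec, dotProduct_transpose_mulVec, dotProduct_comm, smul_eq_mul]
  have hRz : 0 ≤ z ⬝ᵥ R *ᵥ z := by simpa using hR.posSemidef.dotProduct_mulVec_nonneg z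
  have hsq : 0 ≤ (γ • u - x) ⬝ᵥ (γ • u - x) := by
    simpa using dotProduct_star_self_nonneg (γ • u - x)
  simp only [sub_dotProduct, dotProduct_sub, smul_dotProduct, dotProduct_smul, smul_eq_mul,
    dotProduct_comm x u] at hsq
  rw [hform]
  linear_combination hsq + mul_nonneg hγ.le hRz - γ * hux

end Matrix

theorem stmt12 {n m : ℕ} (M : Matrix (Fin n) (Fin m) ℝ) (P : Matrix (Fin m) (Fin m) ℝ)
    (hP : P.PosDef) (γ lam : ℝ) (hγ : 0 < γ) (hlam : 0 < lam)
    (B : Matrix (Fin n) (Fin n) ℝ)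
    (hB : B = γ ^ 2 • (M * (γ • (Mᵀ * M) + lam • P)⁻¹ * Mᵀ)) :
    ∃ h : B.PosSemidef, ∀ i, h.isHermitian.eigenvalues i ≤ γ := by
  have hR : (lam • P).PosDef := hP.smul hlam
  have hB_psd : B.PosSemidef := by
    rw [hB]
    simpa using ((posDef_smul_transpose_mul_self_add hγ.le M hR).inv.posSemidef
      |>.mul_mul_conjTranspose_same M).smul (sq_nonneg γ)
  refine ⟨hB_psd, hB_psd.isHermitian.eigenvalues_le_of_re_dotProduct_mulVec_le fun x => ?_⟩
  simp only [star_trivial, RCLike.re_to_real]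
  calc x ⬝ᵥ B *ᵥ x
      = γ * (γ * (x ⬝ᵥ (M * (γ • (Mᵀ * M) + lam • P)⁻¹ * Mᵀ) *ᵥ x)) := by
        rw [hB, smul_mulVec, dotProduct_smul, smul_eq_mul]; ring
    _ ≤ γ * (x ⬝ᵥ x) :=
        mul_le_mul_of_nonneg_left (mul_dotProduct_mulVec_mul_inv_mul_transpose_le hγ M hR x) hγ.le
end
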